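/- The function P ↦ C(P)/(P/α + β), where C(P) = log₂(1 + cP) with c > 0, α > 0, β > 0, attains a maximum at a unique P* > 0 and is strictly increasing on (0, P*) and strictly decreasing on (P*, ∞); moreover C(P)/(P/α+β) → 0 as P → ∞. -/

import Mathlib

open Real Set Filter

/-- Secrecy energy efficiency as a function of transmit power. -/
noncomputable def EEfun (c α β : ℝ) : ℝ → ℝ :=
  fun P => Real.logb 2 (1 + c * P) / (P / α + β)

/-!
The derivative of `EEfun c α β` at `P ≥ 0` is a positive multiple of
`g P = c (P/α + β) / (1 + cP) - log (1 + cP) / α` (`EEderivNum` below), and `g' P = -c² (P/α + β) / (1 + cP)² < 0`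
(the numerator `log (1 + cP)` is strictly concave and the power consumption is affine).
Since `g 0 = cβ > 0` and `g P → -∞`, `g` has exactly one zero `P*`, at which `EEfun` switches
from strictly increasing to strictly decreasing. The decay at infinity is the fact that
`log` grows slower than any affine function.
-/

section UnimodalOrder

variable {ι κ : Type*} [LinearOrder ι] [Preorder κ] {f : ι → κ} {s : Set ι} {p : ι}

theorem isMaxOn_of_strictMonoOn_of_strictAntiOn (hmono : StrictMonoOn f (s ∩ Iic p))
    (hanti : StrictAntiOn f (s ∩ Ici p)) (hp : p ∈ s) : IsMaxOn f s p := by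
  intro x hx
  rcases le_total x p with hxp | hpx
  · exact hmono.monotoneOn ⟨hx, hxp⟩ ⟨hp, le_rfl⟩ hxp
  · exact hanti.antitoneOn ⟨hp, le_rfl⟩ ⟨hx, hpx⟩ hpx

theorem eq_of_isMaxOn_of_strictMonoOn_of_strictAntiOn (hmono : StrictMonoOn f (s ∩ Iic p))
    (hanti : StrictAntiOn f (s ∩ Ici p)) (hp : p ∈ s) {q : ι} (hq : q ∈ s)
    (hqmax : IsMaxOn f s q) : q = p := by
  by_contra hne
  have hlt : f q < f p := by
    rcases lt_or_gt_of_ne hne with hqp | hpq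
    · exact hmono ⟨hq, hqp.le⟩ ⟨hp, le_rfl⟩ hqp
    · exact hanti ⟨hp, le_rfl⟩ ⟨hq, hpq.le⟩ hpq
  exact (hlt.trans_le (hqmax hp)).false

end UnimodalOrder

noncomputable def EEderivNum (c α β : ℝ) : ℝ → ℝ :=
  fun P => c * (P / α + β) / (1 + c * P) - Real.log (1 + c * P) / α

section EnergyEfficiency

variable {c α β : ℝ}

theorem hasDerivAt_one_add_mul (c x : ℝ) : HasDerivAt (fun P : ℝ => 1 + c * P) c x := by
  simpa using ((hasDerivAt_id x).const_mul c).const_add 1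

theorem hasDerivAt_EEderivNum (hα : α ≠ 0) {x : ℝ} (hx : 1 + c * x ≠ 0) :
    HasDerivAt (EEderivNum c α β) (-(c ^ 2 * (x / α + β)) / (1 + c * x) ^ 2) x := by
  have hpower : HasDerivAt (fun P : ℝ => c * (P / α + β)) (c * (1 / α)) x :=
    (((hasDerivAt_id x).div_const α).add_const β).const_mul c
  refine ((hpower.div (hasDerivAt_one_add_mul c x) hx).sub
    (((hasDerivAt_one_add_mul c x).log hx).div_const α)).congr_deriv ?_
  field_simp
  ring

theorem hasDerivAt_EEfun (hα : α ≠ 0) {x : ℝ} (hx : 1 + c * x ≠ 0) (hD : x / α + β ≠ 0) :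
    HasDerivAt (EEfun c α β) (EEderivNum c α β x / (Real.log 2 * (x / α + β) ^ 2)) x := by
  have hlog2 : Real.log 2 ≠ 0 := (Real.log_pos one_lt_two).ne'
  have hnum : HasDerivAt (fun P : ℝ => Real.log (1 + c * P) / Real.log 2)
      (c / (1 + c * x) / Real.log 2) x :=
    ((hasDerivAt_one_add_mul c x).log hx).div_const _
  have hden : HasDerivAt (fun P : ℝ => P / α + β) (1 / α) x :=
    ((hasDerivAt_id x).div_const α).add_const β
  have hEE : EEfun c α β = fun P => Real.log (1 + c * P) / Real.log 2 / (P / α + β) := rfl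
  rw [hEE]
  refine (hnum.div hden hD).congr_deriv ?_
  simp only [EEderivNum]
  field_simp

theorem strictAntiOn_EEderivNum (hc : 0 < c) (hα : 0 < α) (hβ : 0 < β) :
    StrictAntiOn (EEderivNum c α β) (Ici 0) := by
  have hderiv : ∀ x ∈ Ici (0 : ℝ), HasDerivAt (EEderivNum c α β)
      (-(c ^ 2 * (x / α + β)) / (1 + c * x) ^ 2) x := fun x (hx : 0 ≤ x) =>
    hasDerivAt_EEderivNum hα.ne' (by positivity)
  refine strictAntiOn_of_deriv_neg (convex_Ici 0)
    (fun x hx => (hderiv x hx).continuousAt.continuousWithinAt) fun x hx => ?_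
  rw [interior_Ici] at hx
  have hx : 0 < x := hx
  rw [(hderiv x hx.le).deriv, neg_div]
  exact neg_neg_of_pos (by positivity)

theorem EEderivNum_zero : EEderivNum c α β 0 = c * β := by
  simp [EEderivNum]

theorem EEderivNum_le (hc : 0 < c) (hα : 0 < α) (hβ : 0 < β) {x : ℝ} (hx : 0 ≤ x) :
    EEderivNum c α β x ≤ 1 / α + c * β - Real.log (1 + c * x) / α := by
  have hpos : 0 < 1 + c * x := by positivity
  have hfrac : c * (x / α + β) / (1 + c * x) ≤ 1 / α + c * β := by
    rw [div_le_iff₀ hpos]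
    have : 0 ≤ c * β * (c * x) := by positivity
    field_simp
    nlinarith
  simp only [EEderivNum]
  linarith

theorem eventually_EEderivNum_neg (hc : 0 < c) (hα : 0 < α) (hβ : 0 < β) :
    ∀ᶠ x in atTop, EEderivNum c α β x < 0 := by
  have hlog : Tendsto (fun x => Real.log (1 + c * x) / α) atTop atTop :=
    (Real.tendsto_log_atTop.comp
      (tendsto_atTop_add_const_left _ 1 (tendsto_id.const_mul_atTop hc))).atTop_div_const hα
  filter_upwards [hlog.eventually_gt_atTop (1 / α + c * β), eventually_ge_atTop 0]
    with x hx hx0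
  linarith [EEderivNum_le hc hα hβ hx0]

theorem exists_pos_EEderivNum_eq_zero (hc : 0 < c) (hα : 0 < α) (hβ : 0 < β) :
    ∃ p, 0 < p ∧ EEderivNum c α β p = 0 := by
  obtain ⟨q, hq, hq0⟩ := ((eventually_EEderivNum_neg hc hα hβ).and
    (eventually_ge_atTop 0)).exists
  have hcont : ContinuousOn (EEderivNum c α β) (Icc 0 q) := fun x ⟨hx, _⟩ =>
    (hasDerivAt_EEderivNum hα.ne' (by positivity : 0 < 1 + c * x).ne').continuousAt.continuousWithinAt
  obtain ⟨p, hp, hp0⟩ := intermediate_value_Ioo' hq0 hcont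
    ⟨hq, by rw [EEderivNum_zero]; positivity⟩
  exact ⟨p, hp.1, hp0⟩

theorem hasDerivAt_EEfun_of_nonneg (hc : 0 < c) (hα : 0 < α) (hβ : 0 < β) {x : ℝ}
    (hx : 0 ≤ x) :
    HasDerivAt (EEfun c α β) (EEderivNum c α β x / (Real.log 2 * (x / α + β) ^ 2)) x :=
  hasDerivAt_EEfun hα.ne' (by positivity : 0 < 1 + c * x).ne' (by positivity : 0 < x / α + β).ne'

theorem continuousOn_EEfun (hc : 0 < c) (hα : 0 < α) (hβ : 0 < β) :
    ContinuousOn (EEfun c α β) (Ici 0) := fun _ hx =>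
  (hasDerivAt_EEfun_of_nonneg hc hα hβ hx).continuousAt.continuousWithinAt

theorem strictMonoOn_EEfun (hc : 0 < c) (hα : 0 < α) (hβ : 0 < β) {p : ℝ}
    (hp : EEderivNum c α β p = 0) : StrictMonoOn (EEfun c α β) (Icc 0 p) := by
  refine strictMonoOn_of_deriv_pos (convex_Icc 0 p)
    ((continuousOn_EEfun hc hα hβ).mono Icc_subset_Ici_self) fun x hx => ?_
  rw [interior_Icc] at hx
  have hg : 0 < EEderivNum c α β x := hp ▸ strictAntiOn_EEderivNum hc hα hβ
    (le_of_lt hx.1) (hx.1.trans hx.2).le hx.2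
  rw [(hasDerivAt_EEfun_of_nonneg hc hα hβ hx.1.le).deriv]
  have : 0 < x / α + β := by linarith [div_pos hx.1 hα]
  positivity

theorem strictAntiOn_EEfun (hc : 0 < c) (hα : 0 < α) (hβ : 0 < β) {p : ℝ} (hp0 : 0 ≤ p)
    (hp : EEderivNum c α β p = 0) : StrictAntiOn (EEfun c α β) (Ici p) := by
  refine strictAntiOn_of_deriv_neg (convex_Ici p)
    ((continuousOn_EEfun hc hα hβ).mono (Ici_subset_Ici.mpr hp0)) fun x hx => ?_
  rw [interior_Ici] at hx
  have hx0 : 0 ≤ x := hp0.trans (le_of_lt hx)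
  have hg : EEderivNum c α β x < 0 := hp ▸ strictAntiOn_EEderivNum hc hα hβ hp0 hx0 hx
  rw [(hasDerivAt_EEfun_of_nonneg hc hα hβ hx0).deriv]
  exact div_neg_of_neg_of_pos hg (by positivity)

theorem tendsto_EEfun_atTop (hc : 0 < c) (hα : α ≠ 0) :
    Tendsto (EEfun c α β) atTop (nhds 0) := by
  have hlog : Tendsto (fun y => Real.log y ^ 1 / (1 / (c * α) * y + (β - 1 / (c * α))))
      atTop (nhds 0) :=
    Real.tendsto_pow_log_div_mul_add_atTop _ _ 1 (by simp [hc.ne', hα])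
  have h := (hlog.comp (tendsto_atTop_add_const_left _ 1 (tendsto_id.const_mul_atTop hc))).div_const
    (Real.log 2)
  rw [zero_div] at h
  refine h.congr fun P => ?_
  have hden : 1 / (c * α) * (1 + c * P) + (β - 1 / (c * α)) = P / α + β := by
    field_simp
    ring
  simp only [Function.comp, id, pow_one, hden, EEfun, Real.logb, div_right_comm]

end EnergyEfficiency

theorem see_unimodal (c α β : ℝ) (hc : 0 < c) (hα : 0 < α) (hβ : 0 < β) :
    (∃ Pstar : ℝ, 0 < Pstar ∧
      IsMaxOn (EEfun c α β) (Set.Ioi 0) Pstar ∧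
      StrictMonoOn (EEfun c α β) (Set.Ioo 0 Pstar) ∧
      StrictAntiOn (EEfun c α β) (Set.Ioi Pstar) ∧
      ∀ Q, 0 < Q → IsMaxOn (EEfun c α β) (Set.Ioi 0) Q → Q = Pstar) ∧
    Filter.Tendsto (EEfun c α β) Filter.atTop (nhds 0) := by
  obtain ⟨p, hp, hp0⟩ := exists_pos_EEderivNum_eq_zero hc hα hβ
  have hmono := strictMonoOn_EEfun hc hα hβ hp0
  have hanti := strictAntiOn_EEfun hc hα hβ hp.le hp0
  have hmono' : StrictMonoOn (EEfun c α β) (Ioi 0 ∩ Iic p) :=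
    hmono.mono fun x hx => ⟨le_of_lt hx.1, hx.2⟩
  have hanti' : StrictAntiOn (EEfun c α β) (Ioi 0 ∩ Ici p) := hanti.mono inter_subset_right
  refine ⟨⟨p, hp, isMaxOn_of_strictMonoOn_of_strictAntiOn hmono' hanti' hp,
    hmono.mono Ioo_subset_Icc_self, hanti.mono Ioi_subset_Ici_self,
    fun Q hQ hQmax => eq_of_isMaxOn_of_strictMonoOn_of_strictAntiOn hmono' hanti' hp hQ hQmax⟩,
    tendsto_EEfun_atTop hc hα.ne'⟩
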